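/- Let H, U be Hilbert spaces, A, C : H → H, B : U → H bounded operators. Suppose x₁, x₂, y₁, y₂ : [0,T] → H are C¹ with xᵢ' = A xᵢ − B B* yᵢ, yᵢ' = −A* yᵢ − C*C xᵢ (i = 1,2), and y₁(T) = P₀ x₁(T), y₂(T) = P₀ x₂(T) for a bounded symmetric operator P₀ on H. Then ⟨x₁(0), y₂(0)⟩ = ⟨x₂(0), y₁(0)⟩. -/

import Mathlib

/-!
Along solutions of the Hamiltonian system `x' = A x - R y`, `y' = -A† y - Q x` with `R` and `Q`
self-adjoint, the symplectic form `⟪x₁, y₂⟫ - ⟪x₂, y₁⟫` of two solutions is conserved: the `A`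
terms cancel through the adjoint and the `R`, `Q` terms by their symmetry. At the final time the
boundary condition `yᵢ = P₀ xᵢ` with `P₀` symmetric makes the form vanish, so it vanishes at `0`.
-/

open scoped RealInnerProductSpace

open ContinuousLinearMap

section Hamiltonian

variable {E : Type*} [NormedAddCommGroup E] [InnerProductSpace ℝ E] [CompleteSpace E]
  {A R Q : E →L[ℝ] E} {x₁ x₂ y₁ y₂ : ℝ → E}

theorem hasDerivAt_inner_sub_inner_of_hamiltonian (hR : IsSelfAdjoint R) (hQ : IsSelfAdjoint Q)
    {t : ℝ} (hx₁ : HasDerivAt x₁ (A (x₁ t) - R (y₁ t)) t)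
    (hx₂ : HasDerivAt x₂ (A (x₂ t) - R (y₂ t)) t)
    (hy₁ : HasDerivAt y₁ (-(A.adjoint (y₁ t)) - Q (x₁ t)) t)
    (hy₂ : HasDerivAt y₂ (-(A.adjoint (y₂ t)) - Q (x₂ t)) t) :
    HasDerivAt (fun s ↦ ⟪x₁ s, y₂ s⟫ - ⟪x₂ s, y₁ s⟫) 0 t := by
  have hRy : ⟪R (y₁ t), y₂ t⟫ = ⟪R (y₂ t), y₁ t⟫ := by
    rw [← real_inner_comm (R (y₂ t))]; exact_mod_cast hR.isSymmetric (y₁ t) (y₂ t)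
  have hQx : ⟪x₁ t, Q (x₂ t)⟫ = ⟪x₂ t, Q (x₁ t)⟫ := by
    rw [← real_inner_comm (x₁ t)]; exact_mod_cast hQ.isSymmetric (x₂ t) (x₁ t)
  refine ((hx₁.inner ℝ hy₂).sub (hx₂.inner ℝ hy₁)).congr_deriv ?_
  simp only [inner_sub_left, inner_sub_right, inner_neg_right, adjoint_inner_right, hRy, hQx]
  ring

theorem inner_sub_inner_eq_of_hamiltonian (hR : IsSelfAdjoint R) (hQ : IsSelfAdjoint Q)
    {T : ℝ} (hT : 0 ≤ T)
    (hx₁ : ∀ t ∈ Set.Icc 0 T, HasDerivAt x₁ (A (x₁ t) - R (y₁ t)) t)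
    (hx₂ : ∀ t ∈ Set.Icc 0 T, HasDerivAt x₂ (A (x₂ t) - R (y₂ t)) t)
    (hy₁ : ∀ t ∈ Set.Icc 0 T, HasDerivAt y₁ (-(A.adjoint (y₁ t)) - Q (x₁ t)) t)
    (hy₂ : ∀ t ∈ Set.Icc 0 T, HasDerivAt y₂ (-(A.adjoint (y₂ t)) - Q (x₂ t)) t) :
    ⟪x₁ 0, y₂ 0⟫ - ⟪x₂ 0, y₁ 0⟫ = ⟪x₁ T, y₂ T⟫ - ⟪x₂ T, y₁ T⟫ := by
  have hderiv : ∀ t ∈ Set.Icc 0 T, HasDerivAt (fun s ↦ ⟪x₁ s, y₂ s⟫ - ⟪x₂ s, y₁ s⟫) 0 t :=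
    fun t ht ↦ hasDerivAt_inner_sub_inner_of_hamiltonian hR hQ
      (hx₁ t ht) (hx₂ t ht) (hy₁ t ht) (hy₂ t ht)
  exact (constant_of_has_deriv_right_zero
    (fun t ht ↦ (hderiv t ht).continuousAt.continuousWithinAt)
    (fun t ht ↦ (hderiv t (Set.mem_Icc_of_Ico ht)).hasDerivWithinAt)
    T (Set.right_mem_Icc.2 hT)).symm

end Hamiltonian

theorem isSelfAdjoint_comp_adjoint {𝕜 E F : Type*} [RCLike 𝕜] [NormedAddCommGroup E]
    [InnerProductSpace 𝕜 E] [CompleteSpace E] [NormedAddCommGroup F] [InnerProductSpace 𝕜 F]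
    [CompleteSpace F] (B : F →L[𝕜] E) : IsSelfAdjoint (B ∘L B.adjoint) := by
  rw [isSelfAdjoint_iff', adjoint_comp, adjoint_adjoint]

theorem stmt_11
    {H U : Type*} [NormedAddCommGroup H] [InnerProductSpace ℝ H] [CompleteSpace H]
    [NormedAddCommGroup U] [InnerProductSpace ℝ U] [CompleteSpace U]
    (A C : H →L[ℝ] H) (B : U →L[ℝ] H) (T : ℝ) (hT : 0 < T)
    (P₀ : H →L[ℝ] H) (hP₀symm : ∀ ξ η : H, ⟪P₀ ξ, η⟫ = ⟪ξ, P₀ η⟫)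
    (x₁ x₂ y₁ y₂ : ℝ → H)
    (hx₁ : ∀ t ∈ Set.Icc (0 : ℝ) T, HasDerivAt x₁ (A (x₁ t) - B (B.adjoint (y₁ t))) t)
    (hx₂ : ∀ t ∈ Set.Icc (0 : ℝ) T, HasDerivAt x₂ (A (x₂ t) - B (B.adjoint (y₂ t))) t)
    (hy₁ : ∀ t ∈ Set.Icc (0 : ℝ) T,
      HasDerivAt y₁ (-(A.adjoint (y₁ t)) - C.adjoint (C (x₁ t))) t)
    (hy₂ : ∀ t ∈ Set.Icc (0 : ℝ) T,
      HasDerivAt y₂ (-(A.adjoint (y₂ t)) - C.adjoint (C (x₂ t))) t)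
    (hT₁ : y₁ T = P₀ (x₁ T)) (hT₂ : y₂ T = P₀ (x₂ T)) :
    ⟪x₁ 0, y₂ 0⟫ = ⟪x₂ 0, y₁ 0⟫ := by
  have hQ : IsSelfAdjoint (C.adjoint ∘L C) := by
    simpa using isSelfAdjoint_comp_adjoint C.adjoint
  have hconserved := inner_sub_inner_eq_of_hamiltonian (isSelfAdjoint_comp_adjoint B) hQ
    hT.le hx₁ hx₂ hy₁ hy₂
  have hfinal : ⟪x₁ T, y₂ T⟫ = ⟪x₂ T, y₁ T⟫ := by
    rw [hT₁, hT₂, real_inner_comm, hP₀symm, real_inner_comm]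
  rwa [hfinal, sub_self, sub_eq_zero] at hconserved
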